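/- Let n and r be integers with 3 < r < n, and suppose g ∈ GL_n(ℂ) satisfies (e_1·e_{r−1})(g·x) = (e_1·e_{r−1})(x) for all x ∈ ℂⁿ. Then there exists α ∈ ℂ, α ≠ 0, such that e_1(g·x) = α·e_1(x) and e_{r−1}(g·x) = α^{−1}·e_{r−1}(x) for all x ∈ ℂⁿ. -/

import Mathlib

/-!
Restricted to the hyperplane `e₁ = 0`, the product `(e₁ ∘ g) · (e_{r-1} ∘ g)` vanishes,
while its factor `e_{r-1} ∘ g` does not: `e_m` with `2 ≤ m < n` vanishes on no hyperplane,
in particular not on `g {e₁ = 0}`. Parametrizing the hyperplane linearly and using that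
polynomial rings over `ℂ` are domains, the linear form `e₁ ∘ g` vanishes on `{e₁ = 0}`, so
`e₁ ∘ g = α e₁`. Cancelling the nonzero polynomial `e₁` from
`α e₁ · (e_{r-1} ∘ g) = e₁ e_{r-1}` gives the second identity.
-/

/-- The `k`-th elementary symmetric polynomial in `n` variables, evaluated at `x : Fin n → ℂ`. -/
noncomputable def esymm (n k : ℕ) (x : Fin n → ℂ) : ℂ :=
  ∑ I ∈ Finset.powersetCard k Finset.univ, ∏ i ∈ I, x i

open Finset Matrix

namespace MvPolynomial

variable {R σ : Type*} [CommRing R]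

theorem forall_eval_eq_zero_or_of_eval_mul [IsDomain R] [Infinite R] {p q : MvPolynomial σ R}
    (h : ∀ x, eval x p * eval x q = 0) : (∀ x, eval x p = 0) ∨ ∀ x, eval x q = 0 := by
  have hpq : p * q = 0 := funext fun x => by simpa using h x
  rcases mul_eq_zero.mp hpq with rfl | rfl <;> simp

theorem eval_bind₁_toMvPolynomial [Fintype σ] (A : Matrix σ σ R) (p : MvPolynomial σ R)
    (x : σ → R) : eval x (bind₁ A.toMvPolynomial p) = eval (A *ᵥ x) p := by
  rw [bind₁, aeval_def, algebraMap_eq, ← eval_assoc]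
  congr 2 with i
  exact toMvPolynomial_eval_eq_apply A i x

end MvPolynomial

namespace Matrix

variable {ι K : Type*} [Fintype ι] [DecidableEq ι] [Field K]

variable (ι K) in
def centering : Matrix ι ι K := 1 - (Fintype.card ι : K)⁻¹ • of fun _ _ => 1

theorem centering_mulVec (x : ι → K) :
    centering ι K *ᵥ x = x - ((Fintype.card ι : K)⁻¹ * ∑ i, x i) • 1 := by
  ext i
  simp [centering, mulVec, dotProduct, sub_mul, sum_sub_distrib, one_apply, mul_sum]

theorem sum_centering_mulVec [Nonempty ι] [CharZero K] (x : ι → K) :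
    ∑ i, (centering ι K *ᵥ x) i = 0 := by
  simp [centering_mulVec, sum_sub_distrib]

theorem centering_mulVec_of_sum_eq_zero {x : ι → K} (hx : ∑ i, x i = 0) :
    centering ι K *ᵥ x = x := by
  simp [centering_mulVec, hx]

end Matrix

theorem exists_dotProduct_eq_mul_sum {R ι : Type*} [CommRing R] [Fintype ι] {c : ι → R}
    (h : ∀ x, ∑ i, x i = 0 → c ⬝ᵥ x = 0) :
    ∃ α, ∀ x, c ⬝ᵥ x = α * ∑ i, x i := by
  classical
  rcases isEmpty_or_nonempty ι with _ | ⟨⟨i₀⟩⟩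
  · exact ⟨0, by simp⟩
  have hc : ∀ i, c i = c i₀ := fun i => by
    have := h (Pi.single i 1 - Pi.single i₀ 1) (by simp)
    rwa [dotProduct_sub, dotProduct_single_one, dotProduct_single_one, sub_eq_zero] at this
  exact ⟨c i₀, fun x => by simp [dotProduct, hc, mul_sum]⟩

theorem esymm_eq_eval (n k : ℕ) (x : Fin n → ℂ) :
    esymm n k x = MvPolynomial.eval x (MvPolynomial.esymm (Fin n) ℂ k) := by
  simp [esymm, MvPolynomial.esymm]

theorem esymm_mulVec_eq_eval (n k : ℕ) (A : Matrix (Fin n) (Fin n) ℂ) (x : Fin n → ℂ) :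
    esymm n k (A *ᵥ x) =
      MvPolynomial.eval x
        (MvPolynomial.bind₁ A.toMvPolynomial (MvPolynomial.esymm (Fin n) ℂ k)) := by
  rw [MvPolynomial.eval_bind₁_toMvPolynomial, esymm_eq_eval]

theorem esymm_one_eq_sum (n : ℕ) (x : Fin n → ℂ) : esymm n 1 x = ∑ i, x i := by
  simp [esymm, powersetCard_one]

theorem esymm_ones_eq_choose (n k : ℕ) : esymm n k 1 = n.choose k := by
  simp [esymm]

theorem esymm_ite_mem {n k : ℕ} {S : Finset (Fin n)} (hS : #S = k) (w : Fin n → ℂ) :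
    esymm n k (fun i => if i ∈ S then w i else 0) = ∏ i ∈ S, w i := by
  rw [esymm, ← hS, ← sum_subset (powersetCard_mono (subset_univ S)), powersetCard_self,
    sum_singleton]
  · exact prod_congr rfl fun i hi => if_pos hi
  · intro I hI hIS
    obtain ⟨i, hiI, hiS⟩ := not_subset.mp fun h =>
      hIS (mem_powersetCard.mpr ⟨h, (mem_powersetCard.mp hI).2⟩)
    exact prod_eq_zero hiI (if_neg hiS)

theorem dotProduct_ite_mem {R ι : Type*} [Semiring R] [Fintype ι] [DecidableEq ι] (d : ι → R)
    (S : Finset ι) (w : ι → R) :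
    d ⬝ᵥ (fun i => if i ∈ S then w i else 0) = ∑ i ∈ S, d i * w i := by
  simp [dotProduct, mul_ite, sum_ite_mem]

theorem exists_dotProduct_eq_zero_esymm_ne_zero {n m : ℕ} (hm : 2 ≤ m) (hmn : m < n)
    (d : Fin n → ℂ) : ∃ x, d ⬝ᵥ x = 0 ∧ esymm n m x ≠ 0 := by
  classical
  -- Test vectors are supported on `m` coordinates, where `e_m` is the product of the entries:
  -- avoid the one index where `d` may be nonzero, or else use two indices `a ≠ b` with
  -- `d a, d b ≠ 0` to solve `d ⬝ᵥ x = 0` with nonzero entries.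
  by_cases hd : ∃ j, ∀ i ≠ j, d i = 0
  · obtain ⟨j, hj⟩ := hd
    obtain ⟨S, hSj, hS⟩ := exists_subset_card_eq (s := univ.erase j) (n := m) (by simp; omega)
    refine ⟨fun i => if i ∈ S then 1 else 0, ?_, ?_⟩
    · rw [dotProduct_ite_mem]
      exact sum_eq_zero fun i hi => by rw [hj i (ne_of_mem_erase (hSj hi)), zero_mul]
    · simp [esymm_ite_mem hS]
  push Not at hd
  obtain ⟨a, -, ha⟩ := hd ⟨0, by omega⟩
  obtain ⟨b, hba, hb⟩ := hd a
  obtain ⟨R, hR, hRcard⟩ := exists_subset_card_eq (s := univ \ {a, b}) (n := m - 2) (by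
    rw [card_sdiff_of_subset (subset_univ _), card_univ, Fintype.card_fin, card_pair hba.symm]
    omega)
  have haR : a ∉ R := fun h => by simpa using hR h
  have hbR : b ∉ R := fun h => by simpa using hR h
  set D := ∑ i ∈ R, d i
  -- any `c ∉ {0, -D}` makes both free coordinates nonzero
  obtain ⟨c, hc⟩ := Infinite.exists_notMem_finset ({0, -D} : Finset ℂ)
  simp only [mem_insert, mem_singleton, not_or] at hc
  set w : Fin n → ℂ := fun i => if i = a then c / d a else if i = b then -(D + c) / d b else 1
  have hwa : w a = c / d a := if_pos rfl
  have hwb : w b = -(D + c) / d b := by simp [w, hba]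
  have hwR : ∀ i ∈ R, w i = 1 := fun i hi => by
    simp [w, ne_of_mem_of_not_mem hi haR, ne_of_mem_of_not_mem hi hbR]
  have hS : #(insert a (insert b R)) = m := by
    rw [card_insert_of_notMem (by simp [hba.symm, haR]), card_insert_of_notMem hbR]
    omega
  refine ⟨fun i => if i ∈ insert a (insert b R) then w i else 0, ?_, ?_⟩
  · rw [dotProduct_ite_mem, sum_insert (by simp [hba.symm, haR]), sum_insert hbR,
      sum_congr rfl fun i hi => by rw [hwR i hi, mul_one], hwa, hwb]
    field_simp
    ring
  · rw [esymm_ite_mem hS, prod_insert (by simp [hba.symm, haR]), prod_insert hbR,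
      prod_congr rfl hwR, prod_const_one, mul_one, hwa, hwb]
    have hDc : -(D + c) ≠ 0 := fun h => hc.2 (by linear_combination -h)
    exact mul_ne_zero (div_ne_zero hc.1 ha) (div_ne_zero hDc hb)

section Stabilizer

variable {n m : ℕ} {g : Matrix (Fin n) (Fin n) ℂ}

theorem esymm_one_mulVec_eq_zero_of_sum_eq_zero (hg : IsUnit g) (hm : 2 ≤ m) (hmn : m < n)
    (hstab : ∀ x, esymm n 1 (g *ᵥ x) * esymm n m (g *ᵥ x) = esymm n 1 x * esymm n m x)
    {x : Fin n → ℂ} (hx : ∑ i, x i = 0) : esymm n 1 (g *ᵥ x) = 0 := by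
  have : Nonempty (Fin n) := ⟨⟨0, by omega⟩⟩
  set P := centering (Fin n) ℂ
  -- `P` parametrizes the hyperplane `e₁ = 0`, on which the product vanishes
  have hprod : ∀ y, esymm n 1 ((g * P) *ᵥ y) * esymm n m ((g * P) *ᵥ y) = 0 := fun y => by
    rw [← mulVec_mulVec, hstab, esymm_one_eq_sum, sum_centering_mulVec, zero_mul]
  simp only [esymm_mulVec_eq_eval] at hprod
  rcases MvPolynomial.forall_eval_eq_zero_or_of_eval_mul hprod with h | h
  · have := h x
    rwa [← esymm_mulVec_eq_eval, ← mulVec_mulVec, centering_mulVec_of_sum_eq_zero hx] at this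
  · obtain ⟨y, hy, hne⟩ := exists_dotProduct_eq_zero_esymm_ne_zero hm hmn (1 ᵥ* g⁻¹)
    have hsum : ∑ i, (g⁻¹ *ᵥ y) i = 0 := by rwa [← one_dotProduct, dotProduct_mulVec]
    have := h (g⁻¹ *ᵥ y)
    rw [← esymm_mulVec_eq_eval, ← mulVec_mulVec, centering_mulVec_of_sum_eq_zero hsum,
      mulVec_mulVec, mul_nonsing_inv _ ((isUnit_iff_isUnit_det g).mp hg), one_mulVec] at this
    exact absurd this hne

theorem exists_esymm_one_mulVec_eq_mul (hg : IsUnit g) (hm : 2 ≤ m) (hmn : m < n)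
    (hstab : ∀ x, esymm n 1 (g *ᵥ x) * esymm n m (g *ᵥ x) = esymm n 1 x * esymm n m x) :
    ∃ α, ∀ x, esymm n 1 (g *ᵥ x) = α * esymm n 1 x := by
  obtain ⟨α, hα⟩ := exists_dotProduct_eq_mul_sum (c := 1 ᵥ* g) fun x hx => by
    rw [← dotProduct_mulVec, one_dotProduct, ← esymm_one_eq_sum]
    exact esymm_one_mulVec_eq_zero_of_sum_eq_zero hg hm hmn hstab hx
  refine ⟨α, fun x => ?_⟩
  rw [esymm_one_eq_sum, esymm_one_eq_sum, ← one_dotProduct, dotProduct_mulVec, hα]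

theorem mul_esymm_mulVec_eq_esymm (hn : n ≠ 0) {α : ℂ}
    (hα : ∀ x, esymm n 1 (g *ᵥ x) = α * esymm n 1 x)
    (hstab : ∀ x, esymm n 1 (g *ᵥ x) * esymm n m (g *ᵥ x) = esymm n 1 x * esymm n m x)
    (x : Fin n → ℂ) : α * esymm n m (g *ᵥ x) = esymm n m x := by
  -- cancel the factor `e₁`, which is a nonzero polynomial
  have hprod : ∀ y, MvPolynomial.eval y (MvPolynomial.esymm (Fin n) ℂ 1) *
      MvPolynomial.eval y (MvPolynomial.C α *
        MvPolynomial.bind₁ g.toMvPolynomial (MvPolynomial.esymm (Fin n) ℂ m) -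
          MvPolynomial.esymm (Fin n) ℂ m) = 0 := fun y => by
    simp only [map_sub, map_mul, MvPolynomial.eval_C, ← esymm_mulVec_eq_eval, ← esymm_eq_eval]
    linear_combination hstab y - esymm n m (g *ᵥ y) * hα y
  rcases MvPolynomial.forall_eval_eq_zero_or_of_eval_mul hprod with h | h
  · have := h 1
    rw [← esymm_eq_eval, esymm_ones_eq_choose, Nat.choose_one_right] at this
    exact absurd (Nat.cast_eq_zero.mp this) hn
  · have := h x
    simp only [map_sub, map_mul, MvPolynomial.eval_C, ← esymm_mulVec_eq_eval,
      ← esymm_eq_eval] at this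
    exact sub_eq_zero.mp this

end Stabilizer

/-- Let `3 < r < n` and suppose `g ∈ GLₙ(ℂ)` preserves `e₁ · e_{r-1}`.
Then there is `α ≠ 0` with `e₁(g·x) = α·e₁(x)` and `e_{r-1}(g·x) = α⁻¹·e_{r-1}(x)` for
all `x`. -/
theorem factors_scale (n r : ℕ) (hr : 3 < r) (hrn : r < n)
    (g : Matrix (Fin n) (Fin n) ℂ) (hg : IsUnit g)
    (hstab : ∀ x : Fin n → ℂ,
      esymm n 1 (g.mulVec x) * esymm n (r - 1) (g.mulVec x) =
        esymm n 1 x * esymm n (r - 1) x) :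
    ∃ α : ℂ, α ≠ 0 ∧ ∀ x : Fin n → ℂ,
      esymm n 1 (g.mulVec x) = α * esymm n 1 x ∧
      esymm n (r - 1) (g.mulVec x) = α⁻¹ * esymm n (r - 1) x := by
  obtain ⟨α, hα⟩ := exists_esymm_one_mulVec_eq_mul hg (by omega) (by omega) hstab
  have hαm := mul_esymm_mulVec_eq_esymm (by omega) hα hstab
  have hα0 : α ≠ 0 := by
    rintro rfl
    have := hαm 1
    rw [zero_mul, esymm_ones_eq_choose, eq_comm, Nat.cast_eq_zero] at this
    exact (Nat.choose_pos (by omega)).ne' this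
  exact ⟨α, hα0, fun x => ⟨hα x, by rw [← hαm x, inv_mul_cancel_left₀ hα0]⟩⟩
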